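/- Let $A \in \mathbb{C}^{n\times n}$, $B \in \mathbb{C}^{n\times m}$, $C \in \mathbb{C}^{p\times n}$, $\tau > 0$. Let $\hat{A} = \hat{R}\hat{\Lambda}\hat{R}^{-1}$ with $\hat{R} \in \mathbb{C}^{r\times r}$ invertible and $\hat{\Lambda} = \mathrm{diag}(\hat{\lambda}_1,\ldots,\hat{\lambda}_r)$, let $\hat{B} \in \mathbb{C}^{r\times m}$, $\hat{C} \in \mathbb{C}^{p\times r}$, and suppose $-\hat{\lambda}_i I - A$ and $-\hat{\lambda}_i I - \hat{A}$ are invertible for a given index $i$. Set $B_\tau = \exp(\tau A)B$, $\hat{B}_\tau = \exp(\tau\hat{A})\hat{B}$, let $\hat{r}_i^T$ be the $i$-th row of $\hat{R}^{-1}\hat{B}$, and let $\bar{P}_\tau$ satisfy $A\bar{P}_\tau + \bar{P}_\tau\hat{A}^T + B\hat{B}^T - B_\tau\hat{B}_\tau^T = 0$ and $\hat{P}_\tau$ satisfy $\hat{A}\hat{P}_\tau + \hat{P}_\tau\hat{A}^T + \hat{B}\hat{B}^T - \hat{B}_\tau\hat{B}_\tau^T = 0$. Then the $i$-th column of $\bar{P}_\tau\hat{R}^{-T}$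 equals $(-\hat{\lambda}_i I - A)^{-1}B\hat{r}_i - (-\hat{\lambda}_i I - A)^{-1}B_\tau e^{\hat{\lambda}_i\tau}\hat{r}_i$, and the $i$-th column of $\hat{P}_\tau\hat{R}^{-T}$ equals $(-\hat{\lambda}_i I - \hat{A})^{-1}\hat{B}\hat{r}_i - (-\hat{\lambda}_i I - \hat{A})^{-1}\hat{B}_\tau e^{\hat{\lambda}_i\tau}\hat{r}_i$. -/

import Mathlib

open Matrix NormedSpace

/-!
Since `R̂⁻¹ Â = Λ̂ R̂⁻¹`, right multiplication by `R̂⁻ᵀ` turns a Sylvester equation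
`X P + P Âᵀ = S` into `X Q + Q Λ̂ = S R̂⁻ᵀ` for `Q = P R̂⁻ᵀ`, whose `i`-th column reads
`(-λ̂ᵢ I - X) qᵢ = -(S R̂⁻ᵀ)ᵢ`. The same conjugation gives `R̂⁻¹ exp(τÂ) = exp(τΛ̂) R̂⁻¹`, so the
`i`-th column of `S R̂⁻ᵀ = Bτ (R̂⁻¹B̂τ)ᵀ - B (R̂⁻¹B̂)ᵀ` is `e^{λ̂ᵢτ} Bτ r̂ᵢ - B r̂ᵢ`.
-/

namespace Matrix

variable {ι κ μ K : Type*} [Fintype ι] [Fintype κ] [Fintype μ]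

theorem inv_mul_conj_eq [DecidableEq κ] [CommRing K] {R : Matrix κ κ K} (hR : IsUnit R)
    (M : Matrix κ κ K) :
    R⁻¹ * (R * M * R⁻¹) = M * R⁻¹ := by
  rw [Matrix.mul_assoc, nonsing_inv_mul_cancel_left _ _ ((isUnit_iff_isUnit_det R).mp hR)]

theorem exp_smul_conj_diagonal [DecidableEq κ] {R : Matrix κ κ ℂ} (hR : IsUnit R) (d : κ → ℂ)
    (t : ℂ) :
    exp (t • (R * diagonal d * R⁻¹)) = R * diagonal (fun j => Complex.exp (d j * t)) * R⁻¹ := by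
  have hdiag : t • diagonal d = diagonal (fun j => d j * t) := by
    ext a b; by_cases hab : a = b <;> simp [hab, mul_comm]
  rw [← Matrix.smul_mul, ← Matrix.mul_smul, exp_conj R _ hR, hdiag, exp_diagonal, Pi.exp_def,
    Complex.exp_eq_exp_ℂ]

theorem sylvester_mul_right_of_mul_eq_mul [Semiring K] {X : Matrix ι ι K} {P S : Matrix ι κ K}
    {Y : Matrix κ κ K} {V : Matrix κ μ K} {Z : Matrix μ μ K}
    (h : X * P + P * Y = S) (hV : Y * V = V * Z) :
    X * (P * V) + P * V * Z = S * V := by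
  rw [← h, Matrix.add_mul, Matrix.mul_assoc P Y, hV]
  simp only [Matrix.mul_assoc]

theorem col_eq_inv_mulVec_of_sylvester_diagonal [DecidableEq ι] [DecidableEq κ] [CommRing K]
    {X : Matrix ι ι K} {Q S : Matrix ι κ K} {d : κ → K} (h : X * Q + Q * diagonal d = S) (i : κ)
    (hM : IsUnit (-d i • (1 : Matrix ι ι K) - X)) :
    (fun k => Q k i) = (-d i • (1 : Matrix ι ι K) - X)⁻¹ *ᵥ fun k => -S k i := by
  have hcol : (-d i • (1 : Matrix ι ι K) - X) *ᵥ (fun k => Q k i) = fun k => -S k i := by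
    ext k
    change ((-d i • (1 : Matrix ι ι K) - X) * Q) k i = _
    rw [Matrix.sub_mul, Matrix.smul_mul, Matrix.one_mul, ← h]
    simp only [sub_apply, smul_apply, add_apply, mul_diagonal, smul_eq_mul]
    ring
  rw [← hcol, mulVec_mulVec, nonsing_inv_mul _ ((isUnit_iff_isUnit_det _).mp hM), one_mulVec]

theorem col_mul_transpose_eq_of_sylvester [DecidableEq ι] [DecidableEq κ] [CommRing K]
    {X : Matrix ι ι K} {P : Matrix ι κ K} {Y W : Matrix κ κ K} {F G : Matrix ι μ K}
    {H Hτ : Matrix κ μ K} {d e : κ → K}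
    (hP : X * P + P * Yᵀ + F * Hᵀ - G * Hτᵀ = 0)
    (hY : W * Y = diagonal d * W) (hHτ : W * Hτ = diagonal e * (W * H))
    (i : κ) (hM : IsUnit (-d i • (1 : Matrix ι ι K) - X)) :
    (fun k => (P * Wᵀ) k i) =
      (-d i • (1 : Matrix ι ι K) - X)⁻¹ *ᵥ (F *ᵥ (W * H) i) -
        (-d i • (1 : Matrix ι ι K) - X)⁻¹ *ᵥ (G *ᵥ fun j => e i * (W * H) i j) := by
  have hE : X * (P * Wᵀ) + P * Wᵀ * diagonal d = (G * Hτᵀ - F * Hᵀ) * Wᵀ :=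
    sylvester_mul_right_of_mul_eq_mul (eq_sub_of_add_eq (sub_eq_zero.mp hP))
      (by rw [← transpose_mul, hY, transpose_mul, diagonal_transpose])
  have hS : (G * Hτᵀ - F * Hᵀ) * Wᵀ = G * (diagonal e * (W * H))ᵀ - F * (W * H)ᵀ := by
    rw [Matrix.sub_mul, Matrix.mul_assoc, Matrix.mul_assoc, ← transpose_mul, ← transpose_mul,
      hHτ]
  have hrow : (diagonal e * (W * H)) i = fun j => e i * (W * H) i j :=
    funext fun j => diagonal_mul e (W * H) i j
  rw [col_eq_inv_mulVec_of_sylvester_diagonal hE i hM, ← mulVec_sub, hS, ← hrow]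
  congr 1
  ext k
  simp only [sub_apply, neg_sub, Pi.sub_apply]
  -- `(M * Nᵀ) k i` and `(M *ᵥ N i) k` unfold to the same dot product.
  rfl

end Matrix

theorem time_limited_gramian_columnwise_formula_general
    {n m r : ℕ}
    (A : Matrix (Fin n) (Fin n) ℂ)
    (B : Matrix (Fin n) (Fin m) ℂ)
    (τ : ℝ)
    (Rhat : Matrix (Fin r) (Fin r) ℂ) (hRhat : IsUnit Rhat)
    (lamhat : Fin r → ℂ)
    (Ahat : Matrix (Fin r) (Fin r) ℂ)
    (hAhat : Ahat = Rhat * Matrix.diagonal lamhat * Rhat⁻¹)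
    (Bhat : Matrix (Fin r) (Fin m) ℂ)
    (i : Fin r)
    (hinvA : IsUnit ((-lamhat i) • (1 : Matrix (Fin n) (Fin n) ℂ) - A))
    (hinvAhat : IsUnit ((-lamhat i) • (1 : Matrix (Fin r) (Fin r) ℂ) - Ahat))
    (Btau : Matrix (Fin n) (Fin m) ℂ)
    (Bhattau : Matrix (Fin r) (Fin m) ℂ) (hBhattau : Bhattau = exp ((τ : ℂ) • Ahat) * Bhat)
    (rhat : Fin r → Fin m → ℂ) (hrhat : ∀ i' j, rhat i' j = (Rhat⁻¹ * Bhat) i' j)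
    (Pbartau : Matrix (Fin n) (Fin r) ℂ)
    (hPbartau : A * Pbartau + Pbartau * Ahatᵀ + B * Bhatᵀ - Btau * Bhattauᵀ = 0)
    (Phattau : Matrix (Fin r) (Fin r) ℂ)
    (hPhattau : Ahat * Phattau + Phattau * Ahatᵀ + Bhat * Bhatᵀ - Bhattau * Bhattauᵀ = 0) :
    (fun k => (Pbartau * (Rhat⁻¹)ᵀ) k i) =
        ((-lamhat i) • (1 : Matrix (Fin n) (Fin n) ℂ) - A)⁻¹.mulVec (B.mulVec (rhat i)) -
          ((-lamhat i) • (1 : Matrix (Fin n) (Fin n) ℂ) - A)⁻¹.mulVec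
            (Btau.mulVec (fun j => Complex.exp (lamhat i * τ) * rhat i j)) ∧
      (fun k => (Phattau * (Rhat⁻¹)ᵀ) k i) =
        ((-lamhat i) • (1 : Matrix (Fin r) (Fin r) ℂ) - Ahat)⁻¹.mulVec (Bhat.mulVec (rhat i)) -
          ((-lamhat i) • (1 : Matrix (Fin r) (Fin r) ℂ) - Ahat)⁻¹.mulVec
            (Bhattau.mulVec (fun j => Complex.exp (lamhat i * τ) * rhat i j)) := by
  obtain rfl : rhat = Rhat⁻¹ * Bhat := funext fun i' => funext (hrhat i')
  have hAhat_diag : Rhat⁻¹ * Ahat = diagonal lamhat * Rhat⁻¹ := by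
    rw [hAhat, inv_mul_conj_eq hRhat]
  have hBhattau_diag : Rhat⁻¹ * Bhattau =
      diagonal (fun j => Complex.exp (lamhat j * τ)) * (Rhat⁻¹ * Bhat) := by
    rw [hBhattau, hAhat, exp_smul_conj_diagonal hRhat, ← Matrix.mul_assoc,
      inv_mul_conj_eq hRhat, Matrix.mul_assoc]
  exact ⟨col_mul_transpose_eq_of_sylvester hPbartau hAhat_diag hBhattau_diag i hinvA,
    col_mul_transpose_eq_of_sylvester hPhattau hAhat_diag hBhattau_diag i hinvAhat⟩

/-- **Intermediate column formula in the proof of Theorem 3, part 1.** After the change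
of basis `P̄τ R̂⁻ᵀ`, `P̂τ R̂⁻ᵀ`, the Sylvester equations for the time-limited cross and
reduced controllability gramians decouple column-wise: the `i`-th column of `P̄τ R̂⁻ᵀ`
equals `(−λ̂ᵢI − A)⁻¹ B r̂ᵢ − (−λ̂ᵢI − A)⁻¹ Bτ e^{λ̂ᵢτ} r̂ᵢ`, and similarly for
`P̂τ R̂⁻ᵀ` with `Â`, `B̂`, `B̂τ`. -/
theorem time_limited_gramian_columnwise_formula
    {n m p r : ℕ}
    (A : Matrix (Fin n) (Fin n) ℂ)
    (B : Matrix (Fin n) (Fin m) ℂ)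
    (C : Matrix (Fin p) (Fin n) ℂ)
    (τ : ℝ) (hτ : 0 < τ)
    (Rhat : Matrix (Fin r) (Fin r) ℂ) (hRhat : IsUnit Rhat)
    (lamhat : Fin r → ℂ)
    (Ahat : Matrix (Fin r) (Fin r) ℂ)
    (hAhat : Ahat = Rhat * Matrix.diagonal lamhat * Rhat⁻¹)
    (Bhat : Matrix (Fin r) (Fin m) ℂ)
    (Chat : Matrix (Fin p) (Fin r) ℂ)
    (i : Fin r)
    (hinvA : IsUnit ((-lamhat i) • (1 : Matrix (Fin n) (Fin n) ℂ) - A))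
    (hinvAhat : IsUnit ((-lamhat i) • (1 : Matrix (Fin r) (Fin r) ℂ) - Ahat))
    (Btau : Matrix (Fin n) (Fin m) ℂ) (hBtau : Btau = exp ((τ : ℂ) • A) * B)
    (Bhattau : Matrix (Fin r) (Fin m) ℂ) (hBhattau : Bhattau = exp ((τ : ℂ) • Ahat) * Bhat)
    (rhat : Fin r → Fin m → ℂ) (hrhat : ∀ i' j, rhat i' j = (Rhat⁻¹ * Bhat) i' j)
    (Pbartau : Matrix (Fin n) (Fin r) ℂ)
    (hPbartau : A * Pbartau + Pbartau * Ahatᵀ + B * Bhatᵀ - Btau * Bhattauᵀ = 0)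
    (Phattau : Matrix (Fin r) (Fin r) ℂ)
    (hPhattau : Ahat * Phattau + Phattau * Ahatᵀ + Bhat * Bhatᵀ - Bhattau * Bhattauᵀ = 0) :
    (fun k => (Pbartau * (Rhat⁻¹)ᵀ) k i) =
        ((-lamhat i) • (1 : Matrix (Fin n) (Fin n) ℂ) - A)⁻¹.mulVec (B.mulVec (rhat i)) -
          ((-lamhat i) • (1 : Matrix (Fin n) (Fin n) ℂ) - A)⁻¹.mulVec
            (Btau.mulVec (fun j => Complex.exp (lamhat i * τ) * rhat i j)) ∧
      (fun k => (Phattau * (Rhat⁻¹)ᵀ) k i) =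
        ((-lamhat i) • (1 : Matrix (Fin r) (Fin r) ℂ) - Ahat)⁻¹.mulVec (Bhat.mulVec (rhat i)) -
          ((-lamhat i) • (1 : Matrix (Fin r) (Fin r) ℂ) - Ahat)⁻¹.mulVec
            (Bhattau.mulVec (fun j => Complex.exp (lamhat i * τ) * rhat i j)) :=
  time_limited_gramian_columnwise_formula_general A B τ Rhat hRhat lamhat Ahat hAhat Bhat i hinvA
    hinvAhat Btau Bhattau hBhattau rhat hrhat Pbartau hPbartau Phattau hPhattau
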